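/- arXiv:2302.03077 — 11 statements merged into one kernel-verified Lean document; each statement's English description precedes it below -/
import Mathlib

section
/- Let A be a finite group and φ a permutation of A fixing the identity, with a function π : A → ℤ such that φ(ab) = φ(a)·φ^{π(a)}(b) for all a, b ∈ A. Then the set Ker φ = {x ∈ A : π(x) ≡ 1 (mod |φ|)} is a subgroup of A. -/
/-!
`π x ≡ 1 (mod |φ|)` says exactly that `φ ^ π x = φ`, i.e. by the skew identity that
`φ (x * b) = φ x * φ b` for all `b`. The elements at which a map fixing `1` is
multiplicative in this left-sided sense always form a subgroup.
-/

def IsSkewMorphism {A : Type*} [Group A] (φ : Equiv.Perm A) (π : A → ℤ) : Prop :=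
  φ 1 = 1 ∧ ∀ a b : A, φ (a * b) = φ a * (φ ^ π a) b

def IsSmooth {A : Type*} [Group A] (φ : Equiv.Perm A) (π : A → ℤ) : Prop :=
  ∀ a : A, π (φ a) ≡ π a [ZMOD (orderOf φ)]

section MultiplicativeLocus

variable {A : Type*} [Group A]

def multiplicativeLocus (f : A → A) (hf : f 1 = 1) : Subgroup A where
  carrier := {a | ∀ b, f (a * b) = f a * f b}
  one_mem' b := by rw [one_mul, hf, one_mul]
  mul_mem' {a c} ha hc b := by
    rw [mul_assoc, ha, hc, ← mul_assoc, ← ha]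
  inv_mem' {a} ha b := by
    have hinv : f a⁻¹ = (f a)⁻¹ := by
      refine eq_inv_of_mul_eq_one_right ?_
      rw [← ha, mul_inv_cancel, hf]
    rw [hinv, eq_inv_mul_iff_mul_eq, ← ha, mul_inv_cancel_left]

end MultiplicativeLocus

theorem IsSkewMorphism.zpow_eq_self_iff {A : Type*} [Group A] {φ : Equiv.Perm A} {π : A → ℤ}
    (h : IsSkewMorphism φ π) (a : A) :
    φ ^ π a = φ ↔ ∀ b, φ (a * b) = φ a * φ b := by
  simp only [h.2, mul_right_inj, Equiv.ext_iff]

theorem IsSkewMorphism.power_modEq_one_iff {A : Type*} [Group A] {φ : Equiv.Perm A}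
    {π : A → ℤ} (h : IsSkewMorphism φ π) (a : A) :
    π a ≡ 1 [ZMOD (orderOf φ)] ↔ ∀ b, φ (a * b) = φ a * φ b := by
  rw [← h.zpow_eq_self_iff, ← zpow_eq_zpow_iff_modEq, zpow_one]

theorem stmt0_general {A : Type*} [Group A] (φ : Equiv.Perm A) (π : A → ℤ)
    (h : IsSkewMorphism φ π) :
    ∃ H : Subgroup A, ∀ x : A, x ∈ H ↔ π x ≡ 1 [ZMOD (orderOf φ)] :=
  ⟨multiplicativeLocus φ h.1, fun x => (h.power_modEq_one_iff x).symm⟩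

theorem stmt0 {A : Type*} [Group A] [Fintype A] (φ : Equiv.Perm A) (π : A → ℤ)
    (h : IsSkewMorphism φ π) :
    ∃ H : Subgroup A, ∀ x : A, x ∈ H ↔ π x ≡ 1 [ZMOD (orderOf φ)] :=
  stmt0_general φ π h
end

section
/- Let φ be a skew morphism of a finite group A with power function π. For all a, b ∈ A, π(a) ≡ π(b) (mod |φ|) if and only if ab⁻¹ ∈ Ker φ. -/
theorem forall_inv_map_mul_eq_iff_map_mul_eq {A B : Type*} [Group A] [Group B] (f : A → B)
    (hf : f 1 = 1) (a b : A) :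
    (∀ c, (f a)⁻¹ * f (a * c) = (f b)⁻¹ * f (b * c)) ↔
      ∀ y, f (a * b⁻¹ * y) = f (a * b⁻¹) * f y := by
  constructor
  · intro H y
    have hy := H (b⁻¹ * y)
    have h1 := H b⁻¹
    rw [mul_inv_cancel, hf, mul_one] at h1
    rw [mul_inv_cancel_left, ← mul_assoc] at hy
    rw [inv_mul_eq_iff_eq_mul] at h1 hy
    rw [hy, h1, mul_assoc]
  · intro K c
    have hc := K (b * c)
    have hb := K b
    rw [inv_mul_cancel_right] at hb
    rw [← mul_assoc, inv_mul_cancel_right] at hc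
    rw [hc, hb, mul_inv_rev, mul_assoc, inv_mul_cancel_left]

namespace IsSkewMorphism

variable {A : Type*} [Group A] {φ : Equiv.Perm A} {π : A → ℤ}

theorem zpow_apply (h : IsSkewMorphism φ π) (a c : A) : (φ ^ π a) c = (φ a)⁻¹ * φ (a * c) := by
  rw [h.2, inv_mul_cancel_left]

theorem modEq_iff (h : IsSkewMorphism φ π) (a b : A) :
    π a ≡ π b [ZMOD orderOf φ] ↔ ∀ c, (φ a)⁻¹ * φ (a * c) = (φ b)⁻¹ * φ (b * c) := by
  simp only [← zpow_eq_zpow_iff_modEq, Equiv.ext_iff, h.zpow_apply]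

theorem modEq_one_iff (h : IsSkewMorphism φ π) (x : A) :
    π x ≡ 1 [ZMOD orderOf φ] ↔ ∀ y, φ (x * y) = φ x * φ y := by
  simp only [← zpow_eq_zpow_iff_modEq, zpow_one, Equiv.ext_iff, h.zpow_apply,
    inv_mul_eq_iff_eq_mul]

end IsSkewMorphism

theorem stmt1_general {A : Type*} [Group A] (φ : Equiv.Perm A) (π : A → ℤ)
    (h : IsSkewMorphism φ π) (a b : A) :
    π a ≡ π b [ZMOD (orderOf φ)] ↔ π (a * b⁻¹) ≡ 1 [ZMOD (orderOf φ)] := by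
  rw [h.modEq_iff, h.modEq_one_iff]
  exact forall_inv_map_mul_eq_iff_map_mul_eq φ h.1 a b

theorem stmt1 {A : Type*} [Group A] [Fintype A] (φ : Equiv.Perm A) (π : A → ℤ)
    (h : IsSkewMorphism φ π) (a b : A) :
    π a ≡ π b [ZMOD (orderOf φ)] ↔ π (a * b⁻¹) ≡ 1 [ZMOD (orderOf φ)] :=
  stmt1_general φ π h a b
end

section
/- Let φ and ψ be skew morphisms of finite groups A and B with power functions π_φ and π_ψ, and suppose the direct product φ × ψ (acting coordinatewise on A × B) is a skew morphism of A × B. Then φ × ψ is smooth if and only if both φ and ψ are smooth. -/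
/-!
Restricting the skew-morphism identity of `φ × ψ` to `A × 1` and `1 × B` gives Zhang's congruences
`π (a, b) ≡ π_φ a (mod |φ|)` and `π (a, b) ≡ π_ψ b (mod |ψ|)`. Since `|φ × ψ| = lcm (|φ|, |ψ|)`,
a congruence modulo `|φ × ψ|` is the conjunction of the congruences modulo `|φ|` and `|ψ|`, and
these translate the smoothness condition of `φ × ψ` at `(a, b)` into those of `φ` at `a` and of
`ψ` at `b`.
-/

namespace Equiv.Perm

variable {A B : Type*}

def prodCongrHom (A B : Type*) : Perm A × Perm B →* Perm (A × B) where
  toFun p := Equiv.prodCongr p.1 p.2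
  map_one' := rfl
  map_mul' _ _ := rfl

theorem prodCongrHom_injective [Nonempty A] [Nonempty B] :
    Function.Injective (prodCongrHom A B) := by
  rintro ⟨φ, ψ⟩ ⟨φ', ψ'⟩ h
  obtain ⟨a⟩ := ‹Nonempty A›
  obtain ⟨b⟩ := ‹Nonempty B›
  have h' : ∀ a b, (φ a, ψ b) = (φ' a, ψ' b) := fun a b => DFunLike.congr_fun h (a, b)
  exact Prod.ext (Equiv.ext fun a => congrArg Prod.fst (h' a b))
    (Equiv.ext fun b => congrArg Prod.snd (h' a b))

theorem prodCongr_zpow (φ : Perm A) (ψ : Perm B) (n : ℤ) :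
    Equiv.prodCongr φ ψ ^ n = Equiv.prodCongr (φ ^ n) (ψ ^ n) :=
  (map_zpow (prodCongrHom A B) (φ, ψ) n).symm

theorem orderOf_prodCongr [Nonempty A] [Nonempty B] (φ : Perm A) (ψ : Perm B) :
    orderOf (Equiv.prodCongr φ ψ) = Nat.lcm (orderOf φ) (orderOf ψ) := by
  rw [← Prod.orderOf_mk]
  exact orderOf_injective _ prodCongrHom_injective (φ, ψ)

end Equiv.Perm

namespace IsSkewMorphism

variable {A B : Type*} [Group A] [Group B] {φ : Equiv.Perm A} {ψ : Equiv.Perm B}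
  {πφ : A → ℤ} {πψ : B → ℤ} {π : A × B → ℤ}

theorem prodCongr_modEq_fst (h : IsSkewMorphism (Equiv.prodCongr φ ψ) π)
    (hφ : IsSkewMorphism φ πφ) (a : A) (b : B) : π (a, b) ≡ πφ a [ZMOD orderOf φ] := by
  rw [← zpow_eq_zpow_iff_modEq]
  ext c
  have hc := congrArg Prod.fst (h.2 (a, b) (c, 1))
  simp only [Equiv.Perm.prodCongr_zpow, Equiv.prodCongr_apply, Prod.map, Prod.mk_mul_mk,
    mul_one, hφ.2] at hc
  exact (mul_left_cancel hc).symm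

theorem prodCongr_modEq_snd (h : IsSkewMorphism (Equiv.prodCongr φ ψ) π)
    (hψ : IsSkewMorphism ψ πψ) (a : A) (b : B) : π (a, b) ≡ πψ b [ZMOD orderOf ψ] := by
  rw [← zpow_eq_zpow_iff_modEq]
  ext c
  have hc := congrArg Prod.snd (h.2 (a, b) (1, c))
  simp only [Equiv.Perm.prodCongr_zpow, Equiv.prodCongr_apply, Prod.map, Prod.mk_mul_mk,
    mul_one, hψ.2] at hc
  exact (mul_left_cancel hc).symm

end IsSkewMorphism

theorem Int.ModEq.modEq_iff_of_modEq {n a b a' b' : ℤ} (ha : a ≡ a' [ZMOD n])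
    (hb : b ≡ b' [ZMOD n]) : a ≡ b [ZMOD n] ↔ a' ≡ b' [ZMOD n] :=
  ⟨fun e => (ha.symm.trans e).trans hb, fun e => (ha.trans e).trans hb.symm⟩

theorem stmt5_general {A B : Type*} [Group A] [Group B]
    (φ : Equiv.Perm A) (ψ : Equiv.Perm B) (πφ : A → ℤ) (πψ : B → ℤ) (π : A × B → ℤ)
    (hφ : IsSkewMorphism φ πφ) (hψ : IsSkewMorphism ψ πψ)
    (h : IsSkewMorphism (Equiv.prodCongr φ ψ) π) :
    IsSmooth (Equiv.prodCongr φ ψ) π ↔ IsSmooth φ πφ ∧ IsSmooth ψ πψ := by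
  have smooth_at : ∀ a b, π (φ a, ψ b) ≡ π (a, b) [ZMOD orderOf (Equiv.prodCongr φ ψ)] ↔
      πφ (φ a) ≡ πφ a [ZMOD orderOf φ] ∧ πψ (ψ b) ≡ πψ b [ZMOD orderOf ψ] := fun a b => by
    rw [Equiv.Perm.orderOf_prodCongr, ← Int.lcm_natCast_natCast,
      ← Int.modEq_and_modEq_iff_modEq_lcm,
      (h.prodCongr_modEq_fst hφ _ _).modEq_iff_of_modEq (h.prodCongr_modEq_fst hφ _ _),
      (h.prodCongr_modEq_snd hψ _ _).modEq_iff_of_modEq (h.prodCongr_modEq_snd hψ _ _)]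
  simp only [IsSmooth, Prod.forall, Equiv.prodCongr_apply, Prod.map, smooth_at]
  exact ⟨fun H => ⟨fun a => (H a 1).1, fun b => (H 1 b).2⟩, fun H a b => ⟨H.1 a, H.2 b⟩⟩

theorem stmt5 {A B : Type*} [Group A] [Group B] [Fintype A] [Fintype B]
    (φ : Equiv.Perm A) (ψ : Equiv.Perm B) (πφ : A → ℤ) (πψ : B → ℤ) (π : A × B → ℤ)
    (hφ : IsSkewMorphism φ πφ) (hψ : IsSkewMorphism ψ πψ)
    (h : IsSkewMorphism (Equiv.prodCongr φ ψ) π) :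
    IsSmooth (Equiv.prodCongr φ ψ) π ↔ IsSmooth φ πφ ∧ IsSmooth ψ πψ :=
  stmt5_general φ ψ πφ πψ π hφ hψ h
end

section
/- Let p be an odd prime and e ≥ 2 an integer. Define φ : ℤ_{p^e} → ℤ_{p^e} by φ(x) = −x − p^{e−1}·x(x−1)/2 (mod p^e), and π : ℤ_{p^e} → ℤ by π(x) = 1 − 2x (mod 2p). Then φ is a permutation of ℤ_{p^e} fixing 0, φ has order 2p, φ(x+y) = φ(x) + φ^{π(x)}(y) for all x, y ∈ ℤ_{p^e} (so φ is a skew morphism of ℤ_{p^e} with power function π), and φ is not smooth, i.e., there exists x with π(φ(x)) ≢ π(x) (mod 2p). -/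
/-!
Write `c = p^(e-1)`, so that `c² = 0` and `p c = 0` in `ZMod (p^e)`, with `2` invertible.
A direct computation gives `φ ∘ φ = (1 - c) ·`, a unit multiple of the identity. Hence `φ` is
a bijection, `φ^(2k) = (1 - k c) ·` and `φ^(1 - 2k) = φ ∘ ((1 + k c) ·)`, which turns the skew
identity into the polynomial identity `φ(x + y) = φ(x) + φ((1 + x c) y)`. The order is `2p`:
`φ^(2p) = (1 - p c) · = 1`, `φ² ≠ 1` as `c ≠ 0`, and `φ^p(1) = -(1 - m c) ≠ 1` for `p = 2m + 1`.
Smoothness fails at `x = 1`: `φ(1) = -1`, and `π(-1) ≡ π(1) (mod 2p)` would force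
`-1 ≡ 1 (mod p)`.
-/

def IsAddSkewMorphism {A : Type*} [AddGroup A] (φ : Equiv.Perm A) (π : A → ℤ) : Prop :=
  φ 0 = 0 ∧ ∀ x y : A, φ (x + y) = φ x + (φ ^ π x) y

def IsAddSmooth {A : Type*} [AddGroup A] (φ : Equiv.Perm A) (π : A → ℤ) : Prop :=
  ∀ x : A, π (φ x) ≡ π x [ZMOD (orderOf φ)]

open Function

section SquareZero

variable {R : Type*} [CommRing R] {c u : R}

theorem one_add_pow_of_mul_self_eq_zero (hc : c * c = 0) (k : ℕ) :
    (1 + c) ^ k = 1 + k * c := by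
  induction k with
  | zero => simp
  | succ k ih =>
    rw [pow_succ, ih]
    push_cast
    linear_combination (k : R) * hc

theorem one_sub_pow_of_mul_self_eq_zero (hc : c * c = 0) (k : ℕ) :
    (1 - c) ^ k = 1 - k * c := by
  simpa [sub_eq_add_neg] using one_add_pow_of_mul_self_eq_zero (c := -c) (by simpa using hc) k

-- `u` stands for `1/2`; in `ZMod n`, `2⁻¹` is a junk value unless `n` is odd.
def skewMap (c u x : R) : R := -x - c * (x * (x - 1)) * u

@[simp]
theorem skewMap_zero (c u : R) : skewMap c u 0 = 0 := by simp [skewMap]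

@[simp]
theorem skewMap_one (c u : R) : skewMap c u 1 = -1 := by simp [skewMap]

theorem skewMap_skewMap (hc : c * c = 0) (hu : 2 * u = 1) (x : R) :
    skewMap c u (skewMap c u x) = (1 - c) * x := by
  unfold skewMap
  linear_combination (x * u ^ 2 + x ^ 2 * u ^ 2 - x ^ 2 * c * u ^ 3 - 2 * x ^ 3 * u ^ 2
    + 2 * x ^ 3 * c * u ^ 3 - x ^ 4 * c * u ^ 3) * hc - x * c * hu

theorem skewMap_add (hc : c * c = 0) (hu : 2 * u = 1) (x y : R) :
    skewMap c u (x + y) = skewMap c u x + skewMap c u ((1 + x * c) * y) := by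
  unfold skewMap
  linear_combination (-x * y * u + 2 * x * y ^ 2 * u + x ^ 2 * y ^ 2 * c * u) * hc
    - x * y * c * hu

theorem skewMap_bijective (hc : c * c = 0) (hu : 2 * u = 1) : Bijective (skewMap c u) := by
  have hunit : IsUnit (1 - c) := IsNilpotent.isUnit_one_sub ⟨2, by rw [sq, hc]⟩
  have hcomp : Bijective (skewMap c u ∘ skewMap c u) := by
    convert IsUnit.isUnit_iff_mulLeft_bijective.mp hunit using 1
    funext x
    exact skewMap_skewMap hc hu x
  exact ⟨hcomp.injective.of_comp, hcomp.surjective.of_comp⟩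

noncomputable def skewPerm (hc : c * c = 0) (hu : 2 * u = 1) : Equiv.Perm R :=
  Equiv.ofBijective _ (skewMap_bijective hc hu)

@[simp]
theorem skewPerm_apply (hc : c * c = 0) (hu : 2 * u = 1) (x : R) :
    skewPerm hc hu x = skewMap c u x := rfl

theorem skewPerm_pow_two_mul_apply (hc : c * c = 0) (hu : 2 * u = 1) (k : ℕ) (x : R) :
    (skewPerm hc hu ^ (2 * k)) x = (1 - k * c) * x := by
  rw [← one_sub_pow_of_mul_self_eq_zero hc, pow_mul]
  induction k generalizing x with
  | zero => simp
  | succ k ih =>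
    rw [pow_succ, Equiv.Perm.mul_apply, ih, sq, Equiv.Perm.mul_apply, skewPerm_apply,
      skewPerm_apply, skewMap_skewMap hc hu, pow_succ, mul_assoc]

theorem skewPerm_zpow_neg_two_mul_apply (hc : c * c = 0) (hu : 2 * u = 1) (k : ℕ) (y : R) :
    (skewPerm hc hu ^ (-(2 * k : ℤ))) y = (1 + k * c) * y := by
  rw [zpow_neg, show (2 * k : ℤ) = ((2 * k : ℕ) : ℤ) by push_cast; rfl, zpow_natCast,
    Equiv.Perm.inv_eq_iff_eq, skewPerm_pow_two_mul_apply]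
  linear_combination (k : R) ^ 2 * y * hc

theorem skewPerm_zpow_one_sub_two_mul_apply (hc : c * c = 0) (hu : 2 * u = 1) (k : ℕ) (y : R) :
    (skewPerm hc hu ^ (1 - 2 * (k : ℤ))) y = skewMap c u ((1 + k * c) * y) := by
  rw [sub_eq_add_neg, zpow_add, zpow_one, Equiv.Perm.mul_apply,
    skewPerm_zpow_neg_two_mul_apply, skewPerm_apply]

theorem isAddSkewMorphism_skewPerm (hc : c * c = 0) (hu : 2 * u = 1) (v : R → ℕ)
    (hv : ∀ x, (v x : R) = x) :
    IsAddSkewMorphism (skewPerm hc hu) (fun x => 1 - 2 * (v x : ℤ)) :=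
  ⟨skewMap_zero c u, fun x y => by
    simp only [skewPerm_apply, skewPerm_zpow_one_sub_two_mul_apply, hv, skewMap_add hc hu]⟩

theorem orderOf_eq_two_mul_prime {G : Type*} [Monoid G] {x : G} {p : ℕ} (hp : p.Prime)
    (h : x ^ (2 * p) = 1) (h2 : x ^ 2 ≠ 1) (hp1 : x ^ p ≠ 1) : orderOf x = 2 * p := by
  obtain ⟨a, b, ha, hb, hab⟩ := Nat.dvd_mul.mp (orderOf_dvd_of_pow_eq_one h)
  rcases (Nat.dvd_prime hp).mp hb with rfl | rfl
  · exact absurd (orderOf_dvd_iff_pow_eq_one.mp (by rw [← hab, mul_one]; exact ha)) h2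
  rcases (Nat.dvd_prime Nat.prime_two).mp ha with rfl | rfl
  · exact absurd (orderOf_dvd_iff_pow_eq_one.mp (by rw [← hab, one_mul])) hp1
  · exact hab.symm

theorem orderOf_skewPerm (hc : c * c = 0) (hu : 2 * u = 1) {p : ℕ} (hp : p.Prime) (hodd : Odd p)
    (hpc : (p : R) * c = 0) (hc0 : c ≠ 0) : orderOf (skewPerm hc hu) = 2 * p := by
  apply orderOf_eq_two_mul_prime hp
  · ext x
    rw [skewPerm_pow_two_mul_apply, hpc, sub_zero, one_mul, Equiv.Perm.one_apply]
  · intro h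
    have h1 := skewPerm_pow_two_mul_apply hc hu 1 1
    rw [mul_one, h, Nat.cast_one, one_mul, mul_one, Equiv.Perm.one_apply] at h1
    exact hc0 (by linear_combination h1)
  · obtain ⟨m, rfl⟩ := hodd
    intro h
    have h1 : (skewPerm hc hu ^ (2 * m + 1)) 1 = -(1 - m * c) := by
      rw [pow_succ, Equiv.Perm.mul_apply, skewPerm_apply, skewMap_one,
        skewPerm_pow_two_mul_apply, mul_neg_one]
    rw [h, Equiv.Perm.one_apply] at h1
    -- `m c = 2`, so `2 c = m c² = 0`
    exact hc0 (by linear_combination u * c * h1 + u * m * hc - c * hu)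

end SquareZero

namespace ZMod

theorem natCast_pow_ne_zero_of_lt {p e k : ℕ} (hp : 1 < p) (h : k < e) :
    (p : ZMod (p ^ e)) ^ k ≠ 0 := by
  rw [← Nat.cast_pow, Ne, natCast_eq_zero_iff, Nat.pow_dvd_pow_iff_le_right hp]
  omega

theorem two_mul_inv_two_of_odd {n : ℕ} (hn : Odd n) : 2 * (2 : ZMod n)⁻¹ = 1 :=
  mul_inv_of_unit _ (by exact_mod_cast (isUnit_iff_coprime 2 n).mpr (Nat.coprime_two_left.mpr hn))

theorem castHom_eq_of_one_sub_two_mul_val_modEq {n d : ℕ} [NeZero n] (hd : d ∣ n) {x y : ZMod n}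
    (h : 1 - 2 * (x.val : ℤ) ≡ 1 - 2 * (y.val : ℤ) [ZMOD (2 * d : ℕ)]) :
    castHom hd (ZMod d) x = castHom hd (ZMod d) y := by
  have h2 : 2 * (x.val : ℤ) ≡ 2 * (y.val : ℤ) [ZMOD (2 * d : ℕ)] := by
    simpa only [sub_sub_cancel] using h.sub_left 1
  rw [Nat.cast_mul, Nat.cast_ofNat] at h2
  have hval := (intCast_eq_intCast_iff _ _ d).mpr (Int.ModEq.mul_left_cancel' two_ne_zero h2)
  rwa [Int.cast_natCast, Int.cast_natCast, natCast_val, natCast_val] at hval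

end ZMod

theorem stmt7 (p : ℕ) (hp : p.Prime) (hp2 : p ≠ 2) (e : ℕ) (he : 2 ≤ e) :
    ∃ φ : Equiv.Perm (ZMod (p ^ e)),
      (∀ x : ZMod (p ^ e),
        φ x = -x - (p : ZMod (p ^ e)) ^ (e - 1) * (x * (x - 1)) * (2 : ZMod (p ^ e))⁻¹) ∧
      IsAddSkewMorphism φ (fun x => 1 - 2 * (x.val : ℤ)) ∧
      orderOf φ = 2 * p ∧
      ∃ x : ZMod (p ^ e),
        ¬ ((1 - 2 * (((φ x).val : ℤ))) ≡ (1 - 2 * ((x.val : ℤ))) [ZMOD ((2 * p : ℕ))]) := by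
  have : NeZero (p ^ e) := ⟨pow_ne_zero e hp.ne_zero⟩
  have : Fact (2 < p) := ⟨lt_of_le_of_ne hp.two_le (Ne.symm hp2)⟩
  have hodd : Odd p := hp.odd_of_ne_two hp2
  have hc : (p : ZMod (p ^ e)) ^ (e - 1) * (p : ZMod (p ^ e)) ^ (e - 1) = 0 := by
    rw [← pow_add]
    exact ZMod.natCast_pow_eq_zero_of_le p (by omega)
  have hpc : (p : ZMod (p ^ e)) * (p : ZMod (p ^ e)) ^ (e - 1) = 0 := by
    rw [← pow_succ']
    exact ZMod.natCast_pow_eq_zero_of_le p (by omega)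
  have hu := ZMod.two_mul_inv_two_of_odd (hodd.pow (n := e))
  refine ⟨skewPerm hc hu, fun x => rfl, isAddSkewMorphism_skewPerm hc hu _ ZMod.natCast_zmod_val,
    orderOf_skewPerm hc hu hp hodd hpc (ZMod.natCast_pow_ne_zero_of_lt hp.one_lt (by omega)),
    1, fun h => ZMod.neg_one_ne_one (n := p) ?_⟩
  have h1 := ZMod.castHom_eq_of_one_sub_two_mul_val_modEq (dvd_pow_self p (by omega)) h
  rwa [skewPerm_apply, skewMap_one, map_neg, map_one] at h1
end

section
/- Let n = 2^e·n₁ with n₁ odd. If e ≥ 5 or n₁ is not square-free, then the cyclic group ℤ_n admits a skew morphism that is not smooth. -/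
/-!
When `2 c² = 0` in `ℤ_n`, the map `φ(x) = -x + c x (x + 1)` satisfies
`φ(x + y) = φ(x) + φ(y) + 2cxy`. Since `x (x + 1)` is even, `φ² = (1 - 2c)·`, so the odd powers are
`φ^(2j+1)(y) = φ(y) + 2jcy`, and `π(x) = 2x + 1` makes `φ` a skew morphism. Smoothness would force
`φ^π(φ 1) = φ^π(1)`, i.e. `2c(φ(1) - 1) = 0`, which amounts to `4c = 0`. Writing `n = q d` with
`q ∣ 2d` and `q ∤ 4`, the element `c = d` has `2c² = 0` and `4c ≠ 0`; take `(q, d) = (8, n / 8)`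
when `2⁵ ∣ n` and `(q, d) = (p, n / p)` when `p² ∣ n` for an odd prime `p`.
-/

theorem ZMod.even_mul_add_one {n : ℕ} (x : ZMod n) : Even (x * (x + 1)) := by
  obtain ⟨a, rfl⟩ := ZMod.intCast_surjective x
  simpa using (Int.even_mul_succ_self a).map (Int.castRingHom (ZMod n))

namespace QuadraticSkewMorphism

variable {n : ℕ} {c : ZMod n}

def toFun (c : ZMod n) (x : ZMod n) : ZMod n := -x + c * (x * (x + 1))

theorem toFun_add (x y : ZMod n) : toFun c (x + y) = toFun c x + toFun c y + 2 * c * x * y := by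
  unfold toFun; ring

theorem sq_mul_mul_add_one (hc : 2 * c ^ 2 = 0) (x : ZMod n) : c ^ 2 * (x * (x + 1)) = 0 := by
  obtain ⟨k, hk⟩ := ZMod.even_mul_add_one x
  rw [hk]
  linear_combination k * hc

theorem toFun_toFun (hc : 2 * c ^ 2 = 0) (x : ZMod n) : toFun c (toFun c x) = (1 - 2 * c) * x := by
  unfold toFun
  linear_combination (1 - 2 * x + c * (x * (x + 1))) * sq_mul_mul_add_one hc x

theorem bijective_toFun (hc : 2 * c ^ 2 = 0) : Function.Bijective (toFun c) := by
  refine ⟨fun x y hxy => ?_, fun x => ⟨toFun c ((1 + 2 * c) * x), ?_⟩⟩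
  · have h := congrArg (toFun c) hxy
    rw [toFun_toFun hc, toFun_toFun hc] at h
    linear_combination (1 + 2 * c) * h + 2 * (x - y) * hc
  · rw [toFun_toFun hc]
    linear_combination -2 * x * hc

noncomputable def perm (hc : 2 * c ^ 2 = 0) : Equiv.Perm (ZMod n) :=
  Equiv.ofBijective _ (bijective_toFun hc)

theorem perm_apply (hc : 2 * c ^ 2 = 0) (x : ZMod n) : perm hc x = toFun c x := rfl

theorem perm_pow_two_mul_apply (hc : 2 * c ^ 2 = 0) (j : ℕ) (y : ZMod n) :
    (perm hc ^ (2 * j)) y = y - 2 * j * c * y := by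
  induction j generalizing y with
  | zero => simp
  | succ j ih =>
    rw [mul_add, mul_one, pow_add, Equiv.Perm.mul_apply, sq, Equiv.Perm.mul_apply, perm_apply,
      perm_apply, toFun_toFun hc, ih]
    push_cast
    linear_combination 2 * j * y * hc

theorem perm_pow_two_mul_add_one_apply (hc : 2 * c ^ 2 = 0) (j : ℕ) (y : ZMod n) :
    (perm hc ^ (2 * j + 1)) y = toFun c y + 2 * j * c * y := by
  rw [pow_succ, Equiv.Perm.mul_apply, perm_pow_two_mul_apply hc, perm_apply]
  unfold toFun
  linear_combination -2 * j * sq_mul_mul_add_one hc y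

def power (x : ZMod n) : ℤ := 2 * x.val + 1

theorem perm_zpow_power_apply [NeZero n] (hc : 2 * c ^ 2 = 0) (x y : ZMod n) :
    (perm hc ^ power x) y = toFun c y + 2 * x * c * y := by
  rw [power, show (2 * x.val + 1 : ℤ) = (2 * x.val + 1 : ℕ) by push_cast; rfl, zpow_natCast,
    perm_pow_two_mul_add_one_apply hc, ZMod.natCast_zmod_val]

theorem isAddSkewMorphism [NeZero n] (hc : 2 * c ^ 2 = 0) :
    IsAddSkewMorphism (perm hc) power := by
  refine ⟨by simp [perm_apply, toFun], fun x y => ?_⟩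
  rw [perm_zpow_power_apply hc, perm_apply, perm_apply, toFun_add]
  ring

theorem not_isAddSmooth [NeZero n] (hc : 2 * c ^ 2 = 0) (h4 : 4 * c ≠ 0) :
    ¬ IsAddSmooth (perm hc) power := by
  intro hsmooth
  have hpow : perm hc ^ power (perm hc 1) = perm hc ^ power 1 :=
    zpow_eq_zpow_iff_modEq.mpr (hsmooth 1)
  have h1 := congrArg (· 1) hpow
  simp only [perm_zpow_power_apply hc, perm_apply, toFun] at h1
  exact h4 (by linear_combination -h1 + 2 * hc)

end QuadraticSkewMorphism

open QuadraticSkewMorphism in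
theorem exists_not_isAddSmooth_of_dvd (q d : ℕ) (hd : d ≠ 0) (hq : q ∣ 2 * d) (hq4 : ¬ q ∣ 4) :
    ∃ (φ : Equiv.Perm (ZMod (q * d))) (π : ZMod (q * d) → ℤ),
      IsAddSkewMorphism φ π ∧ ¬ IsAddSmooth φ π := by
  have hq0 : q ≠ 0 := by rintro rfl; exact hd (by simpa using hq)
  have : NeZero (q * d) := ⟨mul_ne_zero hq0 hd⟩
  have hc : 2 * (d : ZMod (q * d)) ^ 2 = 0 := by
    exact_mod_cast (ZMod.natCast_eq_zero_iff _ _).mpr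
      (by rw [sq, ← mul_assoc]; exact mul_dvd_mul_right hq d)
  have h4 : 4 * (d : ZMod (q * d)) ≠ 0 := by
    intro h
    have h' : q * d ∣ 4 * d := (ZMod.natCast_eq_zero_iff _ _).mp (by exact_mod_cast h)
    exact hq4 (Nat.dvd_of_mul_dvd_mul_right (Nat.pos_of_ne_zero hd) h')
  exact ⟨perm hc, power, isAddSkewMorphism hc, not_isAddSmooth hc h4⟩

theorem stmt9 (n e n₁ : ℕ) (hn : n = 2 ^ e * n₁) (hodd : Odd n₁)
    (h : 5 ≤ e ∨ ¬ Squarefree n₁) :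
    ∃ (φ : Equiv.Perm (ZMod n)) (π : ZMod n → ℤ),
      IsAddSkewMorphism φ π ∧ ¬ IsAddSmooth φ π := by
  rcases h with he | hsf
  · obtain ⟨k, rfl⟩ := Nat.exists_eq_add_of_le he
    have hn' : n = 8 * (2 ^ (k + 2) * n₁) := by rw [hn]; ring
    subst hn'
    exact exists_not_isAddSmooth_of_dvd 8 _ (mul_ne_zero (by positivity) hodd.pos.ne')
      ⟨2 ^ k * n₁, by ring⟩ (by decide)
  · obtain ⟨p, hp, m, rfl⟩ : ∃ p, p.Prime ∧ p * p ∣ n₁ := by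
      simpa [Nat.squarefree_iff_prime_squarefree, Nat.prime_iff] using hsf
    have hp4 : ¬ p ∣ 4 := fun h4 => by
      have hp2 : p = 2 := (Nat.prime_dvd_prime_iff_eq hp Nat.prime_two).mp
        (hp.dvd_of_dvd_pow (n := 2) h4)
      subst hp2
      exact Nat.not_even_iff_odd.mpr hodd ⟨2 * m, by ring⟩
    have hn' : n = p * (2 ^ e * p * m) := by rw [hn]; ring
    subst hn'
    exact exists_not_isAddSmooth_of_dvd p _
      (mul_ne_zero (mul_ne_zero (by positivity) hp.ne_zero) (right_ne_zero_of_mul hodd.pos.ne'))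
      (Dvd.intro (2 ^ (e + 1) * m) (by ring)) hp4
end

section
/- Let G ≤ Sym(Ω) be a finite permutation group containing a regular abelian subgroup A, and let N be a normal subgroup of G. Then there exists a subgroup B ≤ A such that the orbits of N on Ω coincide with the orbits of B on Ω. -/
/-!
Take `B` to be the elements of `A` that map every point into its own `N`-orbit. If `n x = y`
with `n ∈ N`, the element `a ∈ A` with `a x = y` lies in `B`: every point is `c x` for some
`c ∈ A`, and since `A` is abelian, `a (c x) = c (n x) = (c n c⁻¹) (c x)` with `c n c⁻¹ ∈ N`.
-/

open MulAction

namespace Equiv.Perm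

variable {Ω : Type*}

lemma mem_orbit_subgroup_iff {N : Subgroup (Perm Ω)} {x y : Ω} :
    y ∈ orbit N x ↔ ∃ n ∈ N, n x = y := by
  simp [mem_orbit_iff, Subgroup.smul_def, Perm.smul_def]

def orbitPreserving (N : Subgroup (Perm Ω)) : Subgroup (Perm Ω) where
  carrier := {p | ∀ z, p z ∈ orbit N z}
  one_mem' z := mem_orbit_self z
  mul_mem' {p q} hp hq z := by
    simpa [orbit_eq_iff.mpr (hq z)] using hp (q z)
  inv_mem' {p} hp z := by
    simpa using mem_orbit_symm.mp (hp (p⁻¹ z))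

lemma apply_mem_orbit_apply {N : Subgroup (Perm Ω)} {g : Perm Ω}
    (hg : ∀ n ∈ N, g * n * g⁻¹ ∈ N) {x y : Ω} (h : y ∈ orbit N x) :
    g y ∈ orbit N (g x) := by
  obtain ⟨n, hn, rfl⟩ := mem_orbit_subgroup_iff.mp h
  exact mem_orbit_subgroup_iff.mpr ⟨g * n * g⁻¹, hg n hn, by simp⟩

lemma mem_orbitPreserving_of_apply_mem_orbit {A N : Subgroup (Perm Ω)}
    (hAcomm : ∀ a b : A, a * b = b * a) (htrans : ∀ x y : Ω, ∃ a : A, (a : Perm Ω) x = y)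
    (hAN : ∀ a ∈ A, ∀ n ∈ N, a * n * a⁻¹ ∈ N) {a : Perm Ω} (ha : a ∈ A) {x : Ω}
    (hx : a x ∈ orbit N x) : a ∈ orbitPreserving N := by
  intro z
  obtain ⟨c, rfl⟩ := htrans x z
  have hca : (c : Perm Ω) (a x) = a ((c : Perm Ω) x) := by
    simpa using congrArg (fun p : A => (p : Perm Ω) x) (hAcomm c ⟨a, ha⟩)
  simpa [hca] using apply_mem_orbit_apply (hAN c c.2) hx

end Equiv.Perm

open Equiv.Perm in
theorem stmt11_general {Ω : Type*} (G A N : Subgroup (Equiv.Perm Ω))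
    (hAG : A ≤ G)
    (hAcomm : ∀ a b : A, a * b = b * a)
    (hreg : ∀ x y : Ω, ∃! a : A, (a : Equiv.Perm Ω) x = y)
    (hnorm : ∀ g ∈ G, ∀ n ∈ N, g * n * g⁻¹ ∈ N) :
    ∃ B : Subgroup (Equiv.Perm Ω), B ≤ A ∧
      ∀ x y : Ω, (∃ n ∈ N, n x = y) ↔ ∃ b ∈ B, b x = y := by
  have htrans x y : ∃ a : A, (a : Equiv.Perm Ω) x = y := (hreg x y).exists
  refine ⟨A ⊓ orbitPreserving N, inf_le_left, fun x y => ?_⟩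
  rw [← mem_orbit_subgroup_iff]
  constructor
  · intro hy
    obtain ⟨a, rfl⟩ := htrans x y
    exact ⟨a, ⟨a.2, mem_orbitPreserving_of_apply_mem_orbit hAcomm htrans
      (fun b hb => hnorm b (hAG hb)) a.2 hy⟩, rfl⟩
  · rintro ⟨b, ⟨-, hb⟩, rfl⟩
    exact hb x

theorem stmt11 {Ω : Type*} [Fintype Ω] (G A N : Subgroup (Equiv.Perm Ω))
    (hAG : A ≤ G) (hNG : N ≤ G)
    (hAcomm : ∀ a b : A, a * b = b * a)
    (hreg : ∀ x y : Ω, ∃! a : A, (a : Equiv.Perm Ω) x = y)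
    (hnorm : ∀ g ∈ G, ∀ n ∈ N, g * n * g⁻¹ ∈ N) :
    ∃ B : Subgroup (Equiv.Perm Ω), B ≤ A ∧
      ∀ x y : Ω, (∃ n ∈ N, n x = y) ↔ ∃ b ∈ B, b x = y :=
  stmt11_general G A N hAG hAcomm hreg hnorm
end

section
/- Let N ≅ ℤ_p × ℤ_p for a prime p and let K ≤ Aut(N) with |K| coprime to p. If N contains a K-invariant subgroup of order p, then K is isomorphic to a subgroup of ℤ_{p−1} × ℤ_{p−1}. -/
/-!
An element of `K` that acts trivially both on the invariant line `H` and on the quotient line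
`N ⧸ H` has the form `x ↦ x + d x` with `d N ⊆ H` and `d H = 0`, so its `p`-th power is the
identity; since `|K|` is prime to `p`, it is trivial. Hence `K` embeds into
`Aut H × Aut (N ⧸ H) ≅ ℤ_{p-1} × ℤ_{p-1}`.
-/

open Multiplicative (toAdd ofAdd)

namespace AddAut

variable {V : Type*} [AddCommGroup V] {H : AddSubgroup V}
  {K : Subgroup (Multiplicative (AddAut V))}

theorem map_eq_of_invariant (hK : ∀ σ ∈ K, ∀ h ∈ H, toAdd σ h ∈ H)
    {σ : Multiplicative (AddAut V)} (hσ : σ ∈ K) :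
    H.map (toAdd σ : V ≃+ V).toAddMonoidHom = H := by
  refine le_antisymm (AddSubgroup.map_le_iff_le_comap.mpr fun h hh => hK σ hσ h hh) fun h hh => ?_
  exact ⟨toAdd σ⁻¹ h, hK _ (inv_mem hσ) h hh, by simp⟩

theorem nsmul_apply_of_unipotent {σ : AddAut V} (hfix : ∀ h ∈ H, σ h = h)
    (hdiff : ∀ x, σ x - x ∈ H) (n : ℕ) (x : V) : (n • σ) x = x + n • (σ x - x) := by
  induction n with
  | zero => simp
  | succ n ih =>
    rw [succ_nsmul', add_apply, ih, map_add, hfix _ (H.nsmul_mem (hdiff x) n), succ_nsmul]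
    abel

theorem nsmul_eq_zero_of_unipotent {σ : AddAut V} (hfix : ∀ h ∈ H, σ h = h)
    (hdiff : ∀ x, σ x - x ∈ H) {p : ℕ} (hexp : ∀ x : V, p • x = 0) : p • σ = 0 :=
  AddEquiv.ext fun x => by simp [nsmul_apply_of_unipotent hfix hdiff, hexp]

variable (hK : ∀ σ ∈ K, ∀ h ∈ H, toAdd σ h ∈ H)

def restrictHom : K →* Multiplicative (AddAut H) where
  toFun σ := ofAdd
    { toFun x := ⟨toAdd σ.1 x, hK σ σ.2 x x.2⟩
      invFun x := ⟨toAdd σ⁻¹.1 x, hK _ σ⁻¹.2 x x.2⟩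
      left_inv x := by ext : 1; simp
      right_inv x := by ext : 1; simp
      map_add' x y := by ext : 1; simp }
  map_one' := rfl
  map_mul' _ _ := rfl

def quotientHom : K →* Multiplicative (AddAut (V ⧸ H)) where
  toFun σ := ofAdd (QuotientAddGroup.congr H H (toAdd σ.1) (map_eq_of_invariant hK σ.2))
  map_one' := by
    refine toAdd.injective (AddEquiv.ext fun x => ?_)
    induction x using QuotientAddGroup.induction_on
    rfl
  map_mul' _ _ := by
    refine toAdd.injective (AddEquiv.ext fun x => ?_)
    induction x using QuotientAddGroup.induction_on
    rfl

theorem restrictHom_apply_coe (σ : K) (x : H) :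
    (toAdd (restrictHom hK σ) x : V) = toAdd σ.1 x :=
  rfl

theorem quotientHom_apply_mk (σ : K) (x : V) :
    toAdd (quotientHom hK σ) (x : V ⧸ H) = (toAdd σ.1 x : V ⧸ H) :=
  rfl

theorem injective_restrictHom_prod_quotientHom {p : ℕ} (hexp : ∀ x : V, p • x = 0)
    (hcop : (Nat.card K).Coprime p) :
    Function.Injective ((restrictHom hK).prod (quotientHom hK)) := by
  rw [injective_iff_map_eq_one]
  intro σ hσ
  have hfix (h : V) (hh : h ∈ H) : toAdd σ.1 h = h :=
    (restrictHom_apply_coe hK σ ⟨h, hh⟩).symm.trans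
      (congrArg Subtype.val (DFunLike.congr_fun (congrArg toAdd (congrArg Prod.fst hσ)) ⟨h, hh⟩))
  have hdiff (x : V) : toAdd σ.1 x - x ∈ H :=
    QuotientAddGroup.eq_iff_sub_mem.mp <| (quotientHom_apply_mk hK σ x).symm.trans
      (DFunLike.congr_fun (congrArg toAdd (congrArg Prod.snd hσ)) (x : V ⧸ H))
  have hpow : σ ^ p = 1 ^ p := by
    rw [one_pow]
    exact Subtype.ext (congrArg ofAdd (nsmul_eq_zero_of_unipotent hfix hdiff hexp))
  exact (powCoprime hcop).injective hpow

end AddAut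

noncomputable def AddAut.mulEquivZModPredOfCardEqPrime {W : Type*} [AddGroup W] {p : ℕ}
    [Fact p.Prime] (hW : Nat.card W = p) :
    Multiplicative (AddAut W) ≃* Multiplicative (ZMod (p - 1)) :=
  (AddEquiv.toMultiplicativeLeft ((congr (addEquivOfPrimeCardEq hW (Nat.card_zmod p))).trans
    (ZMod.AddAutEquivUnits p))).trans <| mulEquivOfCyclicCardEq <| by
      rw [Nat.card_eq_fintype_card, ZMod.card_units, Nat.card_congr toAdd, Nat.card_zmod]

theorem stmt12 (p : ℕ) (hp : p.Prime)
    (K : Subgroup (Multiplicative (AddAut (ZMod p × ZMod p))))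
    (hcop : Nat.Coprime (Nat.card K) p)
    (hinv : ∃ H : AddSubgroup (ZMod p × ZMod p), Nat.card H = p ∧
      ∀ σ ∈ K, ∀ h ∈ H, (Multiplicative.toAdd σ) h ∈ H) :
    ∃ f : K →* Multiplicative (ZMod (p - 1) × ZMod (p - 1)),
      Function.Injective f := by
  have : Fact p.Prime := ⟨hp⟩
  obtain ⟨H, hH, hK⟩ := hinv
  have hexp (x : ZMod p × ZMod p) : p • x = 0 := by
    rw [← Nat.cast_smul_eq_nsmul (ZMod p), ZMod.natCast_self, zero_smul]
  have hQ : Nat.card ((ZMod p × ZMod p) ⧸ H) = p := by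
    have hcard := H.card_eq_card_quotient_mul_card_addSubgroup
    rw [Nat.card_prod, Nat.card_zmod, hH] at hcard
    exact (Nat.eq_of_mul_eq_mul_right hp.pos hcard).symm
  let e := ((AddAut.mulEquivZModPredOfCardEqPrime hH).prodCongr
    (AddAut.mulEquivZModPredOfCardEqPrime hQ)).trans (MulEquiv.prodMultiplicative _ _).symm
  exact ⟨e.toMonoidHom.comp ((AddAut.restrictHom hK).prod (AddAut.quotientHom hK)),
    e.injective.comp (AddAut.injective_restrictHom_prod_quotientHom hK hexp hcop)⟩
end

section
/- Let G ≤ Sym(Ω) with G = AY where A is abelian and regular on Ω and Y = G_x is the stabilizer of a point x. If O_p(G) ≤ A for every prime divisor p of |G|, then A is normal in G, and in fact A = F(G), the Fitting subgroup of G. -/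
/-!
Itô: if `G = AY` with `A` and `Y` abelian, then `⁅A, Y⁆` is abelian. It is normalised by `A` and
by `Y`, hence normal in `G`. A normal nilpotent subgroup of a finite group is generated by its
Sylow subgroups, which are characteristic in it and hence normal `p`-subgroups of `G`, so they
lie in `A`. Applied to `⁅A, Y⁆` this gives `⁅A, Y⁆ ≤ A`, i.e. `Y` normalises `A`, so `A` is normal.
-/

open Subgroup
open scoped commutatorElement IsMulCommutative

section Commutator

variable {G : Type*} [Group G]

theorem commutatorElement_mul_left_of_commute {x t y : G} (h : Commute t y) :
    ⁅x * t, y⁆ = ⁅x, y⁆ := by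
  rw [commutatorElement_mul_left_eq_conj_mul, h.commutator_eq, mul_one, mul_inv_cancel, one_mul]

theorem commutatorElement_mul_right_of_commute {x y s : G} (h : Commute x s) :
    ⁅x, y * s⁆ = ⁅x, y⁆ := by
  rw [commutatorElement_mul_right_eq_mul_conj, h.commutator_eq, mul_one, mul_inv_cancel_right]

theorem conj_commutatorElement_of_commute_left {g x y x' t : G} (hgy : Commute g y)
    (hx : g * x * g⁻¹ = x' * t) (ht : Commute t y) : g * ⁅x, y⁆ * g⁻¹ = ⁅x', y⁆ := by
  rw [conjugate_commutatorElement, hgy.mul_inv_cancel, hx, commutatorElement_mul_left_of_commute ht]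

theorem conj_commutatorElement_of_commute_right {g x y y' s : G} (hgx : Commute g x)
    (hy : g * y * g⁻¹ = y' * s) (hs : Commute x s) : g * ⁅x, y⁆ * g⁻¹ = ⁅x, y'⁆ := by
  rw [conjugate_commutatorElement, hgx.mul_inv_cancel, hy,
    commutatorElement_mul_right_of_commute hs]

theorem Subgroup.normal_of_sup_le_normalizer {H₁ H₂ K : Subgroup G} (h : H₁ ⊔ H₂ = ⊤)
    (h₁ : H₁ ≤ normalizer K) (h₂ : H₂ ≤ normalizer K) : K.Normal :=
  normalizer_eq_top_iff.mp (top_le_iff.mp (h ▸ sup_le h₁ h₂))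

theorem Subgroup.commute_of_isMulCommutative {H : Subgroup G} [IsMulCommutative H] {g h : G}
    (hg : g ∈ H) (hh : h ∈ H) : Commute g h :=
  setLike_mul_comm hg hh

theorem exists_mem_mul_mem_of_forall_eq_mul {H K : Subgroup G}
    (hHK : ∀ g : G, ∃ h ∈ H, ∃ k ∈ K, g = h * k) (g : G) : ∃ k ∈ K, ∃ h ∈ H, g = k * h := by
  obtain ⟨h, hh, k, hk, e⟩ := hHK g⁻¹
  exact ⟨k⁻¹, inv_mem hk, h⁻¹, inv_mem hh, by rw [← mul_inv_rev, ← e, inv_inv]⟩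

end Commutator

section Sylow

variable {G : Type*} [Group G] [Finite G]

theorem Subgroup.eq_top_of_forall_sylow_le {K : Subgroup G}
    (hK : ∀ (p : ℕ) [Fact p.Prime] (P : Sylow p G), (P : Subgroup G) ≤ K) : K = ⊤ := by
  rw [← index_eq_one]
  by_contra hne
  have : Fact K.index.minFac.Prime := ⟨Nat.minFac_prime hne⟩
  obtain ⟨P⟩ : Nonempty (Sylow K.index.minFac G) := inferInstance
  exact P.not_dvd_index ((Nat.minFac_dvd _).trans (index_dvd_of_le (hK _ P)))

theorem Subgroup.le_of_normal_of_isNilpotent {A H : Subgroup G}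
    (hA : ∀ p : ℕ, p.Prime → p ∣ Nat.card G →
      ∀ P : Subgroup G, P.Normal → IsPGroup p P → P ≤ A)
    [H.Normal] [Group.IsNilpotent H] : H ≤ A := by
  rw [← subgroupOf_eq_top]
  refine eq_top_of_forall_sylow_le fun p hp P ↦ ?_
  have := Sylow.characteristic_of_normal P inferInstance
  suffices P.map H.subtype ≤ A from fun h hh ↦ this ⟨h, hh, rfl⟩
  have hP : IsPGroup p (P.map H.subtype) := P.isPGroup'.map H.subtype
  rcases hP.card_eq_or_dvd with htriv | hdvd
  · rw [card_eq_one.mp htriv]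
    exact bot_le
  · exact hA p hp.out (hdvd.trans (card_subgroup_dvd_card _)) _ inferInstance hP

end Sylow

section Ito

variable {G : Type*} [Group G] {A Y : Subgroup G} [IsMulCommutative A] [IsMulCommutative Y]

-- Conjugating `⁅a, y⁆` successively by `d⁻¹, c⁻¹, d, c` changes only the `A`-entry or only the
-- `Y`-entry at each step, and the four changes cancel.
theorem commute_commutatorElement_of_forall_eq_mul (hAY : ∀ g : G, ∃ a ∈ A, ∃ y ∈ Y, g = a * y)
    {a c y d : G} (ha : a ∈ A) (hc : c ∈ A) (hy : y ∈ Y) (hd : d ∈ Y) :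
    Commute ⁅c, d⁆ ⁅a, y⁆ := by
  obtain ⟨a₂, ha₂, y₂, hy₂, h₂⟩ := hAY (d⁻¹ * a * d⁻¹⁻¹)
  obtain ⟨y₁, hy₁, a₁, ha₁, h₁⟩ := exists_mem_mul_mem_of_forall_eq_mul hAY (c⁻¹ * y * c⁻¹⁻¹)
  have e₁ : d⁻¹ * ⁅a, y⁆ * d⁻¹⁻¹ = ⁅a₂, y⁆ :=
    conj_commutatorElement_of_commute_left (commute_of_isMulCommutative (inv_mem hd) hy) h₂
      (commute_of_isMulCommutative hy₂ hy)
  have e₂ : c⁻¹ * ⁅a₂, y⁆ * c⁻¹⁻¹ = ⁅a₂, y₁⁆ :=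
    conj_commutatorElement_of_commute_right (commute_of_isMulCommutative (inv_mem hc) ha₂) h₁
      (commute_of_isMulCommutative ha₂ ha₁)
  have e₃ : d * ⁅a₂, y₁⁆ * d⁻¹ = ⁅a, y₁⁆ := by
    refine conj_commutatorElement_of_commute_left (t := d * y₂⁻¹ * d⁻¹)
      (commute_of_isMulCommutative hd hy₁) ?_
      (commute_of_isMulCommutative (mul_mem (mul_mem hd (inv_mem hy₂)) (inv_mem hd)) hy₁)
    rw [eq_mul_inv_of_mul_eq h₂.symm]
    group
  have e₄ : c * ⁅a, y₁⁆ * c⁻¹ = ⁅a, y⁆ := by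
    refine conj_commutatorElement_of_commute_right (s := c * a₁⁻¹ * c⁻¹)
      (commute_of_isMulCommutative hc ha) ?_
      (commute_of_isMulCommutative ha (mul_mem (mul_mem hc (inv_mem ha₁)) (inv_mem hc)))
    rw [eq_mul_inv_of_mul_eq h₁.symm]
    group
  have key : ⁅c, d⁆ * ⁅a, y⁆ * ⁅c, d⁆⁻¹
      = c * (d * (c⁻¹ * (d⁻¹ * ⁅a, y⁆ * d⁻¹⁻¹) * c⁻¹⁻¹) * d⁻¹) * c⁻¹ := by
    simp only [commutatorElement_def]
    group
  exact mul_inv_eq_iff_eq_mul.mp (by rw [key, e₁, e₂, e₃, e₄])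

theorem isMulCommutative_commutator_of_forall_eq_mul
    (hAY : ∀ g : G, ∃ a ∈ A, ∃ y ∈ Y, g = a * y) : IsMulCommutative (⁅A, Y⁆ : Subgroup G) := by
  rw [Subgroup.commutator_def]
  refine isMulCommutative_closure ?_
  rintro _ ⟨a, ha, y, hy, rfl⟩ _ ⟨c, hc, d, hd, rfl⟩
  exact commute_commutatorElement_of_forall_eq_mul hAY hc ha hd hy

end Ito

theorem stmt16_general {G Ω : Type*} [Group G] [Fintype G] [MulAction G Ω]
    (A : Subgroup G) (hAcomm : ∀ a b : A, a * b = b * a)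
    (x : Ω) (hY : IsCyclic (MulAction.stabilizer G x))
    (hfact : ∀ g : G, ∃ a ∈ A, ∃ y ∈ MulAction.stabilizer G x, g = a * y)
    (hOp : ∀ p : ℕ, p.Prime → p ∣ Fintype.card G →
      ∀ P : Subgroup G, P.Normal → IsPGroup p P → P ≤ A) :
    A.Normal ∧ Group.IsNilpotent A ∧
      ∀ H : Subgroup G, H.Normal → Group.IsNilpotent H → H ≤ A := by
  set Y := MulAction.stabilizer G x
  have : IsMulCommutative A := isMulCommutative_iff.mpr hAcomm
  have hOp' : ∀ p : ℕ, p.Prime → p ∣ Nat.card G →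
      ∀ P : Subgroup G, P.Normal → IsPGroup p P → P ≤ A := by
    simpa only [Nat.card_eq_fintype_card] using hOp
  have hAY : A ⊔ Y = ⊤ := eq_top_iff.mpr fun g _ ↦ by
    obtain ⟨a, ha, y, hy, rfl⟩ := hfact g
    exact mul_mem_sup ha hy
  have : (⁅A, Y⁆ : Subgroup G).Normal := normal_of_sup_le_normalizer hAY
    (normalizer_commutator_ge_left A Y) (normalizer_commutator_ge_right A Y)
  have : IsMulCommutative (⁅A, Y⁆ : Subgroup G) := isMulCommutative_commutator_of_forall_eq_mul hfact
  have hA : A.Normal := normal_of_sup_le_normalizer hAY le_normalizer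
    (le_normalizer_iff_commutator_le_left.mpr (le_of_normal_of_isNilpotent hOp'))
  exact ⟨hA, inferInstance, fun H _ _ ↦ le_of_normal_of_isNilpotent hOp'⟩

theorem stmt16 {G Ω : Type*} [Group G] [Fintype G] [Fintype Ω] [MulAction G Ω]
    (hfaith : ∀ g : G, (∀ ω : Ω, g • ω = ω) → g = 1)
    (A : Subgroup G) (hAcomm : ∀ a b : A, a * b = b * a)
    (hreg : ∀ ω₁ ω₂ : Ω, ∃! a : A, (a : G) • ω₁ = ω₂)
    (x : Ω) (hY : IsCyclic (MulAction.stabilizer G x))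
    (hfact : ∀ g : G, ∃ a ∈ A, ∃ y ∈ MulAction.stabilizer G x, g = a * y)
    (hOp : ∀ p : ℕ, p.Prime → p ∣ Fintype.card G →
      ∀ P : Subgroup G, P.Normal → IsPGroup p P → P ≤ A) :
    A.Normal ∧ Group.IsNilpotent A ∧
      ∀ H : Subgroup G, H.Normal → Group.IsNilpotent H → H ≤ A :=
  stmt16_general A hAcomm x hY hfact hOp
end

section
/- Let p be an odd prime, A = ℤ_p × ℤ_p with basis (a, x), and let d, n ∈ ℤ_p^*, r ∈ {2, …, p−1}. Suppose φ is a skew morphism of A of the form φ(a^i x^j) = a^{ri + (1/2)dj(j−1)rn}(bx^r)^j for some b ∈ ⟨a⟩, with power function π(a^i x^j) ≡ 1 + jnk (mod pk), where k is the multiplicative order of r modulo p and |φ| = pk. Then φ is not smooth: π(φ(x)) ≢ π(x) (mod pk). -/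
theorem ZMod.orderOf_pos_of_ne_zero {p : ℕ} [Fact p.Prime] {a : ZMod p} (ha : a ≠ 0) :
    0 < orderOf a :=
  (isOfFinOrder_iff_pow_eq_one.mpr
    ⟨p - 1, Nat.sub_pos_of_lt (Fact.out : p.Prime).one_lt, ZMod.pow_card_sub_one_eq_one ha⟩).orderOf_pos

theorem Int.not_one_add_mul_modEq_one_add_mul {p : ℕ} [Fact p.Prime] {r s n k : ℤ}
    (hrs : (r : ZMod p) ≠ s) (hn : (n : ZMod p) ≠ 0) (hk : k ≠ 0) :
    ¬ 1 + r * n * k ≡ 1 + s * n * k [ZMOD p * k] := by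
  intro h
  have hmod : r * n ≡ s * n [ZMOD p] := (Int.ModEq.add_left_cancel' 1 h).mul_right_cancel' hk
  have hcast : (r : ZMod p) * n = s * n := by
    exact_mod_cast (ZMod.intCast_eq_intCast_iff _ _ p).mpr hmod
  exact hrs (mul_right_cancel₀ hn hcast)

theorem stmt17_general (p : ℕ) (hp : p.Prime)
    (d n r : ℕ) (hn : ¬ p ∣ n) (hr : 2 ≤ r) (hrp : r ≤ p - 1)
    (k : ℕ) (hk : k = orderOf (r : ZMod p))
    (β : ℕ) (φ : Equiv.Perm (ZMod p × ZMod p))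
    (hφ : ∀ u : ZMod p × ZMod p,
      φ u = (r * u.1 + (d : ZMod p) * n * r * (u.2 * (u.2 - 1)) * (2 : ZMod p)⁻¹ + u.2 * β,
             r * u.2)) :
    ¬ ((1 + (((φ (0, 1)).2.val : ℤ)) * n * k) ≡
        (1 + ((((0, 1) : ZMod p × ZMod p).2.val : ℤ)) * n * k) [ZMOD ((p * k : ℕ))]) := by
  have : Fact p.Prime := ⟨hp⟩
  have hrp' : r < p := by omega
  have hφx : (φ (0, 1)).2.val = r := by
    simp [hφ, ZMod.val_natCast, Nat.mod_eq_of_lt hrp']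
  have hr1 : ((r : ℤ) : ZMod p) ≠ ((1 : ℤ) : ZMod p) := by
    push_cast
    rw [← Nat.cast_one, Ne, ZMod.natCast_eq_natCast_iff', Nat.mod_eq_of_lt hrp',
      Nat.mod_eq_of_lt hp.one_lt]
    omega
  have hn' : ((n : ℤ) : ZMod p) ≠ 0 := by
    rwa [Int.cast_natCast, Ne, ZMod.natCast_eq_zero_iff]
  have hr0 : (r : ZMod p) ≠ 0 := by
    rw [Ne, ZMod.natCast_eq_zero_iff, Nat.dvd_iff_mod_eq_zero, Nat.mod_eq_of_lt hrp']
    omega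
  have hk0 : (k : ℤ) ≠ 0 := by
    rw [hk]
    exact_mod_cast (ZMod.orderOf_pos_of_ne_zero hr0).ne'
  rw [hφx, ZMod.val_one, Nat.cast_mul, Nat.cast_one]
  exact Int.not_one_add_mul_modEq_one_add_mul hr1 hn' hk0

theorem stmt17 (p : ℕ) (hp : p.Prime) (hp2 : p ≠ 2)
    (d n r : ℕ) (hd : ¬ p ∣ d) (hn : ¬ p ∣ n) (hr : 2 ≤ r) (hrp : r ≤ p - 1)
    (k : ℕ) (hk : k = orderOf (r : ZMod p))
    (β : ℕ) (φ : Equiv.Perm (ZMod p × ZMod p))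
    (hφ : ∀ u : ZMod p × ZMod p,
      φ u = (r * u.1 + (d : ZMod p) * n * r * (u.2 * (u.2 - 1)) * (2 : ZMod p)⁻¹ + u.2 * β,
             r * u.2))
    (hsk : IsAddSkewMorphism φ (fun u => 1 + (u.2.val : ℤ) * n * k))
    (hord : orderOf φ = p * k) :
    ¬ ((1 + (((φ (0, 1)).2.val : ℤ)) * n * k) ≡
        (1 + ((((0, 1) : ZMod p × ZMod p).2.val : ℤ)) * n * k) [ZMOD ((p * k : ℕ))]) :=
  stmt17_general p hp d n r hn hr hrp k hk β φ hφ
end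

section
/- Let A be a non-cyclic finite abelian group of order n = 2^f·n₁ with n₁ odd. If every skew morphism of A is smooth, then n₁ is square-free and the Sylow 2-subgroup of A contains no direct factor isomorphic to ℤ_{2^e} for any e ≥ 5. -/
/-!
If `q * q = 0` in a commutative ring `R`, the map `σ x = (q - 1) x + q x²` is a permutation whose
square is multiplication by `1 - 2q`, so `σ^(2t+1) y = σ y + 2tqy`. As
`σ (x + y) = σ x + σ y + 2qxy`, the power `2t + 1` with `tq = qx` makes `σ` a skew morphism of
`(R, +)`; evaluating the powers attached to `σ 1` and to `1` at `1` gives `σ 1 - 2q` and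
`σ 1 + 2q`, so `σ` is not smooth once `4q ≠ 0`. This handles `ℤ_{p^e}` (`q = p^(e-1)`, `p` odd,
`e ≥ 2`), `ℤ_{2^e}` (`q = 2^(e-3)`, `e ≥ 6`) and `ℤ_p × ℤ_p`, read as the dual numbers over `ℤ_p`
(`q = ε`). In `ℤ_32` no such `q` exists and an explicit skew morphism is checked by computation.
A non-smooth `φ` on a direct factor gives the non-smooth `φ × id`, and by the structure theorem an
odd `p²` dividing `|A|` yields a direct factor `ℤ_{p^e}` with `e ≥ 2` or `ℤ_p × ℤ_p`.
-/

theorem isSmooth_iff {A : Type*} [Group A] {φ : Equiv.Perm A} {π : A → ℤ} :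
    IsSmooth φ π ↔ ∀ a, φ ^ π (φ a) = φ ^ π a := by
  simp only [IsSmooth, zpow_eq_zpow_iff_modEq]

def HasNonSmoothSkewMorphism (A : Type*) [Group A] : Prop :=
  ∃ (φ : Equiv.Perm A) (π : A → ℤ), IsSkewMorphism φ π ∧ ¬ IsSmooth φ π

def Equiv.Perm.prodIdHom (α β : Type*) : Equiv.Perm α →* Equiv.Perm (α × β) where
  toFun σ := σ.prodCongr (Equiv.refl β)
  map_one' := rfl
  map_mul' _ _ := rfl

@[simp]
theorem Equiv.Perm.prodIdHom_apply {α β : Type*} (σ : Equiv.Perm α) (x : α × β) :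
    Equiv.Perm.prodIdHom α β σ x = (σ x.1, x.2) :=
  rfl

namespace HasNonSmoothSkewMorphism

variable {A B : Type*} [Group A] [Group B]

theorem of_mulEquiv (h : HasNonSmoothSkewMorphism A) (e : A ≃* B) :
    HasNonSmoothSkewMorphism B := by
  obtain ⟨φ, π, ⟨hφ1, hφmul⟩, hns⟩ := h
  set F := e.toEquiv.permCongrHom
  have hF : ∀ (k : ℤ) (b : B), (F φ ^ k) b = e ((φ ^ k) (e.symm b)) := by
    intro k b
    rw [← map_zpow]
    rfl
  have hF1 : ∀ b, F φ b = e (φ (e.symm b)) := fun b => by simpa using hF 1 b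
  refine ⟨F φ, π ∘ e.symm, ⟨by simp [hF1, hφ1], fun a b => ?_⟩, ?_⟩
  · simp [hF1, hF, hφmul]
  · rw [isSmooth_iff] at hns ⊢
    push Not at hns ⊢
    obtain ⟨a, ha⟩ := hns
    refine ⟨e a, fun h => ha (Equiv.ext fun x => ?_)⟩
    simpa [hF, hF1] using congrArg e.symm (Equiv.congr_fun h (e x))

theorem prod_right (h : HasNonSmoothSkewMorphism A) (B : Type*) [Group B] :
    HasNonSmoothSkewMorphism (A × B) := by
  obtain ⟨φ, π, ⟨hφ1, hφmul⟩, hns⟩ := h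
  set F := Equiv.Perm.prodIdHom A B
  have hF : ∀ (k : ℤ) (x : A × B), (F φ ^ k) x = ((φ ^ k) x.1, x.2) := by
    intro k x
    rw [← map_zpow]
    rfl
  refine ⟨F φ, π ∘ Prod.fst, ⟨by simp [F, hφ1], fun a b => ?_⟩, ?_⟩
  · simp [F, hF, hφmul]
  · rw [isSmooth_iff] at hns ⊢
    push Not at hns ⊢
    obtain ⟨a, ha⟩ := hns
    refine ⟨(a, 1), fun h => ha (Equiv.ext fun x => ?_)⟩
    simpa [hF, F] using congrArg Prod.fst (Equiv.congr_fun h (x, 1))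

theorem of_addEquiv_prod {V W X : Type*} [AddGroup V] [AddGroup W] [AddGroup X]
    (h : HasNonSmoothSkewMorphism (Multiplicative V)) (e : W ≃+ V × X) :
    HasNonSmoothSkewMorphism (Multiplicative W) :=
  (h.prod_right (Multiplicative X)).of_mulEquiv
    (e.toMultiplicative.trans (MulEquiv.prodMultiplicative V X)).symm

theorem of_additive {V : Type*} [AddGroup V] (σ : Equiv.Perm V) (π : V → ℤ) (h0 : σ 0 = 0)
    (hadd : ∀ x y, σ (x + y) = σ x + (σ ^ π x) y) (x₀ : V) (hx₀ : σ ^ π (σ x₀) ≠ σ ^ π x₀) :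
    HasNonSmoothSkewMorphism (Multiplicative V) :=
  ⟨σ, π, ⟨h0, hadd⟩, fun h => hx₀ (isSmooth_iff.mp h x₀)⟩

theorem pi_of_single {ι : Type*} [DecidableEq ι] {M : ι → Type*} [∀ i, AddGroup (M i)]
    (i : ι) (h : HasNonSmoothSkewMorphism (Multiplicative (M i))) :
    HasNonSmoothSkewMorphism (Multiplicative (∀ j, M j)) :=
  h.of_addEquiv_prod ⟨Equiv.piSplitAt i M, fun _ _ => rfl⟩

theorem pi_of_pair {ι : Type*} [DecidableEq ι] {M : ι → Type*} [∀ i, AddGroup (M i)]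
    {i j : ι} (hij : i ≠ j) (h : HasNonSmoothSkewMorphism (Multiplicative (M i × M j))) :
    HasNonSmoothSkewMorphism (Multiplicative (∀ k, M k)) :=
  let split_i : (∀ k, M k) ≃+ M i × ∀ k : {k // k ≠ i}, M k :=
    ⟨Equiv.piSplitAt i M, fun _ _ => rfl⟩
  let split_j : (∀ k : {k // k ≠ i}, M k) ≃+
      M j × ∀ k : {k : {k // k ≠ i} // k ≠ ⟨j, hij.symm⟩}, M k :=
    ⟨Equiv.piSplitAt (⟨j, hij.symm⟩ : {k // k ≠ i}) _, fun _ _ => rfl⟩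
  h.of_addEquiv_prod ((split_i.trans ((AddEquiv.refl _).prodCongr split_j)).trans
    AddEquiv.prodAssoc.symm)


end HasNonSmoothSkewMorphism

section SquareZero

variable {R : Type*} [CommRing R] (q : R)

def quadraticMap (x : R) : R := (q - 1) * x + q * x ^ 2

theorem quadraticMap_add (x y : R) :
    quadraticMap q (x + y) = quadraticMap q x + quadraticMap q y + 2 * q * x * y := by
  unfold quadraticMap
  ring

variable {q}

theorem mul_quadraticMap (hq : q * q = 0) (x : R) : q * quadraticMap q x = -(q * x) := by
  unfold quadraticMap
  linear_combination (x + x ^ 2) * hq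

theorem quadraticMap_quadraticMap (hq : q * q = 0) (x : R) :
    quadraticMap q (quadraticMap q x) = (1 - 2 * q) * x := by
  have h := mul_quadraticMap hq x
  unfold quadraticMap at h ⊢
  linear_combination ((q - 1) * x + q * x ^ 2) * h + (x - x ^ 3) * hq

theorem quadraticMap_one_add_two_mul (hq : q * q = 0) (x : R) :
    quadraticMap q ((1 + 2 * q) * x) = (1 + 2 * q) * quadraticMap q x := by
  unfold quadraticMap
  linear_combination 2 * (1 + 2 * q) * x ^ 2 * hq

def quadraticPerm (hq : q * q = 0) : Equiv.Perm R where
  toFun := quadraticMap q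
  invFun y := quadraticMap q ((1 + 2 * q) * y)
  left_inv x := by
    simp only
    rw [quadraticMap_one_add_two_mul hq, quadraticMap_quadraticMap hq]
    linear_combination (-4 * x) * hq
  right_inv y := by
    simp only
    rw [quadraticMap_quadraticMap hq]
    linear_combination (-4 * y) * hq

theorem quadraticPerm_apply (hq : q * q = 0) (x : R) : quadraticPerm hq x = quadraticMap q x :=
  rfl

theorem quadraticPerm_pow_odd_apply (hq : q * q = 0) (t : ℕ) (y : R) :
    (quadraticPerm hq ^ (2 * t + 1)) y = quadraticMap q y + 2 * t * q * y := by
  induction t with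
  | zero => simp [quadraticPerm_apply]
  | succ t ih =>
    rw [show 2 * (t + 1) + 1 = 2 + (2 * t + 1) by ring, pow_add, Equiv.Perm.mul_apply, ih, sq,
      Equiv.Perm.mul_apply, quadraticPerm_apply, quadraticPerm_apply,
      quadraticMap_quadraticMap hq]
    push_cast
    linear_combination (-2) * mul_quadraticMap hq y - 4 * t * y * hq

end SquareZero

theorem HasNonSmoothSkewMorphism.of_sq_eq_zero {R : Type*} [CommRing R] {q : R}
    (hq : q * q = 0) (h4 : 4 * q ≠ 0) (hnat : ∀ x : R, ∃ t : ℕ, q * x = t * q) :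
    HasNonSmoothSkewMorphism (Multiplicative R) := by
  choose t ht using hnat
  have hpow : ∀ x y, (quadraticPerm hq ^ ((2 * t x + 1 : ℕ) : ℤ)) y
      = quadraticMap q y + 2 * q * x * y := by
    intro x y
    rw [zpow_natCast, quadraticPerm_pow_odd_apply]
    linear_combination (-2 * y) * ht x
  refine of_additive (quadraticPerm hq) (fun x => ((2 * t x + 1 : ℕ) : ℤ)) ?_ (fun x y => ?_) 1
    fun h => h4 ?_
  · simp [quadraticPerm_apply, quadraticMap]
  · rw [hpow, quadraticPerm_apply, quadraticPerm_apply, quadraticMap_add]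
    ring
  · have h1 := Equiv.congr_fun h 1
    rw [hpow, hpow, quadraticPerm_apply] at h1
    linear_combination -h1 + 2 * mul_quadraticMap hq 1

theorem HasNonSmoothSkewMorphism.zmod_mul {m r : ℕ} (hr : r ≠ 0) (hmr : m ∣ r)
    (hm4 : ¬ m ∣ 4) : HasNonSmoothSkewMorphism (Multiplicative (ZMod (m * r))) := by
  have hm : m ≠ 0 := by
    rintro rfl
    exact hr (Nat.eq_zero_of_zero_dvd hmr)
  have : NeZero (m * r) := ⟨mul_ne_zero hm hr⟩
  refine of_sq_eq_zero (q := (r : ZMod (m * r))) ?_ ?_ fun x => ⟨x.val, ?_⟩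
  · exact_mod_cast (ZMod.natCast_eq_zero_iff _ _).mpr (mul_dvd_mul_right hmr r)
  · rw [← Nat.cast_ofNat, ← Nat.cast_mul, Ne, ZMod.natCast_eq_zero_iff,
      Nat.mul_dvd_mul_iff_right (Nat.pos_of_ne_zero hr)]
    exact hm4
  · rw [ZMod.natCast_zmod_val]
    exact mul_comm _ _

open DualNumber in
theorem HasNonSmoothSkewMorphism.dualNumber_zmod (n : ℕ) [NeZero n] (hn4 : ¬ n ∣ 4) :
    HasNonSmoothSkewMorphism (Multiplicative (DualNumber (ZMod n))) := by
  refine of_sq_eq_zero (q := ε) eps_mul_eps (fun h => hn4 ?_) fun x => ⟨x.fst.val, ?_⟩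
  · have h4 : ((4 : ℕ) : DualNumber (ZMod n)) * ε = 0 := by exact_mod_cast h
    refine (ZMod.natCast_eq_zero_iff 4 n).mp ?_
    simpa only [TrivSqZeroExt.snd_mul, TrivSqZeroExt.fst_natCast, snd_eps, fst_eps, smul_eq_mul,
      mul_one, MulOpposite.op_zero, zero_smul, add_zero, TrivSqZeroExt.snd_zero]
      using congrArg TrivSqZeroExt.snd h4
  · ext <;> simp [-ZMod.natCast_val, ZMod.natCast_zmod_val]

def zmod32Perm : Equiv.Perm (ZMod 32) where
  toFun x := 3 * x + 4 * x ^ 2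
  invFun y := 11 * y + 20 * y ^ 2
  left_inv := by decide
  right_inv := by decide

theorem HasNonSmoothSkewMorphism.zmod_thirtyTwo :
    HasNonSmoothSkewMorphism (Multiplicative (ZMod 32)) := by
  refine of_additive zmod32Perm (fun x => ((2 * (x.val % 4) + 1 : ℕ) : ℤ)) (by decide)
    (fun x y => ?_) 1 (fun h => ?_)
  · simp only [zpow_natCast]
    revert x y
    decide
  · have h1 := Equiv.congr_fun h 1
    simp only [zpow_natCast] at h1
    revert h1
    decide


theorem Nat.Prime.exists_of_sq_dvd_prod_pow {ι : Type*} [Fintype ι] [DecidableEq ι] {p : ℕ}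
    (hp : p.Prime) {ps es : ι → ℕ} (hps : ∀ i, (ps i).Prime) (h : p ^ 2 ∣ ∏ i, ps i ^ es i) :
    (∃ i, ps i = p ∧ 2 ≤ es i) ∨
      ∃ i j, i ≠ j ∧ ps i = p ∧ es i = 1 ∧ ps j = p ∧ es j = 1 := by
  have hfactor : ∀ s : Finset ι, p ∣ ∏ i ∈ s, ps i ^ es i → ∃ i ∈ s, ps i = p ∧ es i ≠ 0 := by
    intro s hs
    obtain ⟨i, hi, hdvd⟩ := (Prime.dvd_finsetProd_iff hp.prime _).mp hs
    refine ⟨i, hi, ((Nat.prime_dvd_prime_iff_eq hp (hps i)).mp (hp.dvd_of_dvd_pow hdvd)).symm,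
      fun h0 => hp.one_lt.ne' ?_⟩
    rwa [h0, pow_zero, Nat.dvd_one] at hdvd
  obtain ⟨i, -, hpi, hei⟩ := hfactor Finset.univ (dvd_trans (dvd_pow_self p two_ne_zero) h)
  rcases Nat.lt_or_ge (es i) 2 with hi2 | hi2
  swap; · exact Or.inl ⟨i, hpi, hi2⟩
  have hei1 : es i = 1 := by omega
  rw [← Finset.mul_prod_erase Finset.univ _ (Finset.mem_univ i), hpi, hei1, pow_one, sq] at h
  obtain ⟨j, hj, hpj, hej⟩ := hfactor _ (Nat.dvd_of_mul_dvd_mul_left hp.pos h)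
  rcases Nat.lt_or_ge (es j) 2 with hj2 | hj2
  · exact Or.inr ⟨i, j, (Finset.ne_of_mem_erase hj).symm, hpi, hei1, hpj, by omega⟩
  · exact Or.inl ⟨j, hpj, hj2⟩

theorem HasNonSmoothSkewMorphism.of_sq_dvd_card {A : Type*} [CommGroup A] [Finite A] {p : ℕ}
    (hp : p.Prime) (hp2 : p ≠ 2) (h : p ^ 2 ∣ Nat.card A) : HasNonSmoothSkewMorphism A := by
  classical
  obtain ⟨ι, _, ps, hps, es, ⟨e⟩⟩ := AddCommGroup.equiv_directSum_zmod_of_finite (Additive A)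
  let e' : Additive A ≃+ ∀ i, ZMod (ps i ^ es i) := e.trans (DirectSum.addEquivProd _)
  have hcard : Nat.card A = ∏ i, ps i ^ es i := by
    rw [Nat.card_congr (Additive.ofMul.trans e'.toEquiv), Nat.card_pi]
    simp only [Nat.card_zmod]
  have hp4 : ¬ p ∣ 4 := fun h4 =>
    hp2 ((Nat.prime_dvd_prime_iff_eq hp Nat.prime_two).mp (hp.dvd_of_dvd_pow (n := 2) h4))
  refine of_mulEquiv ?_ (AddEquiv.toMultiplicativeRight e').symm
  rcases hp.exists_of_sq_dvd_prod_pow hps (hcard ▸ h) with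
    ⟨i, hpi, hei⟩ | ⟨i, j, hij, hpi, hei, hpj, hej⟩
  · refine pi_of_single i ?_
    obtain ⟨k, hk⟩ := Nat.exists_eq_add_of_le' hei
    rw [hk, pow_succ', hpi]
    exact zmod_mul (pow_ne_zero _ hp.ne_zero) (dvd_pow_self p (by omega)) hp4
  · refine pi_of_pair hij ?_
    rw [hpi, hei, hpj, hej, pow_one]
    have : NeZero p := ⟨hp.ne_zero⟩
    -- `DualNumber R` is `R × R` as an additive group
    exact (dualNumber_zmod p hp4).of_mulEquiv
      (AddEquiv.refl _ : DualNumber (ZMod p) ≃+ ZMod p × ZMod p).toMultiplicative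

theorem HasNonSmoothSkewMorphism.zmod_two_pow {e : ℕ} (he : 5 ≤ e) :
    HasNonSmoothSkewMorphism (Multiplicative (ZMod (2 ^ e))) := by
  obtain rfl | he : e = 5 ∨ 6 ≤ e := by omega
  · exact zmod_thirtyTwo
  · rw [← pow_mul_pow_sub 2 (by omega : 3 ≤ e)]
    exact zmod_mul (by positivity) (pow_dvd_pow 2 (by omega)) (by decide)

theorem stmt18_general {A : Type*} [CommGroup A] [Fintype A]
    (f n₁ : ℕ) (hcard : Fintype.card A = 2 ^ f * n₁) (hodd : Odd n₁)
    (hsm : ∀ (φ : Equiv.Perm A) (π : A → ℤ), IsSkewMorphism φ π → IsSmooth φ π) :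
    Squarefree n₁ ∧
      ¬ ∃ e : ℕ, 5 ≤ e ∧ ∃ B : Subgroup A,
        Nonempty (A ≃* Multiplicative (ZMod (2 ^ e)) × B) := by
  have hA : ¬ HasNonSmoothSkewMorphism A := fun ⟨φ, π, hφ, hns⟩ => hns (hsm φ π hφ)
  refine ⟨Nat.squarefree_iff_prime_squarefree.mpr fun p hp hdvd => hA ?_, ?_⟩
  · have hp2 : p ≠ 2 := by
      rintro rfl
      exact Nat.not_even_iff_odd.mpr hodd (even_iff_two_dvd.mpr (dvd_of_mul_left_dvd hdvd))
    refine .of_sq_dvd_card hp hp2 ?_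
    rw [Nat.card_eq_fintype_card, hcard, sq]
    exact dvd_mul_of_dvd_right hdvd _
  · rintro ⟨e, he, B, ⟨iso⟩⟩
    exact hA (((HasNonSmoothSkewMorphism.zmod_two_pow he).prod_right B).of_mulEquiv iso.symm)

theorem stmt18 {A : Type*} [CommGroup A] [Fintype A] (hnc : ¬ IsCyclic A)
    (f n₁ : ℕ) (hcard : Fintype.card A = 2 ^ f * n₁) (hodd : Odd n₁)
    (hsm : ∀ (φ : Equiv.Perm A) (π : A → ℤ), IsSkewMorphism φ π → IsSmooth φ π) :
    Squarefree n₁ ∧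
      ¬ ∃ e : ℕ, 5 ≤ e ∧ ∃ B : Subgroup A,
        Nonempty (A ≃* Multiplicative (ZMod (2 ^ e)) × B) :=
  stmt18_general f n₁ hcard hodd hsm
end

section
/- Let G = A × B be a finite abelian group with A ≅ ℤ_p × ℤ_p for an odd prime p. Then G admits a skew morphism that is not smooth. -/
/-!
Write `c x = x (x - 1) / 2`, so that `c (x + y) = c x + c y + x y`. On `ℤₚ × ℤₚ` the permutation
`α (x, y) = (-x, -y + c x)` squares to the shear `(x, y) ↦ (x, y + x)`, so
`α ^ (1 - 2k) (x, y) = (-x, -y + k x + c x)`. With `π (x, y) = 1 - 2x` the identity of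
`c` is exactly the skew-morphism law. Evaluating at `(1, 0)` shows that `α ^ π u` determines
the first coordinate of `u`, while `α` negates it; so smoothness would force `x = -x`,
impossible for `p` odd. Both properties pass to `α × id_B`.
-/

open Equiv

theorem isAddSmooth_iff_zpow_eq {A : Type*} [AddGroup A] (φ : Perm A) (π : A → ℤ) :
    IsAddSmooth φ π ↔ ∀ x, φ ^ π (φ x) = φ ^ π x := by
  simp only [IsAddSmooth, zpow_eq_zpow_iff_modEq]

section Product

variable (A B : Type*)

def Equiv.Perm.prodReflHom : Perm A →* Perm (A × B) where
  toFun σ := σ.prodCongr (Equiv.refl B)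
  map_one' := rfl
  map_mul' _ _ := rfl

variable {A B}

@[simp]
theorem Equiv.Perm.prodReflHom_apply (σ : Perm A) (u : A × B) :
    Perm.prodReflHom A B σ u = (σ u.1, u.2) := rfl

theorem Equiv.Perm.prodReflHom_injective [Nonempty B] :
    Function.Injective (Perm.prodReflHom A B) := by
  intro σ τ h
  ext a
  simpa using congr($h (a, Classical.arbitrary B))

variable [AddGroup A] [AddGroup B] {α : Perm A} {π : A → ℤ}

theorem IsAddSkewMorphism.prodReflHom (hα : IsAddSkewMorphism α π) :
    IsAddSkewMorphism (Perm.prodReflHom A B α) (fun u => π u.1) := by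
  refine ⟨by simp [hα.1], fun u v => ?_⟩
  rw [← map_zpow (Perm.prodReflHom A B)]
  simp only [Perm.prodReflHom_apply, Prod.fst_add, Prod.snd_add, hα.2, Prod.mk_add_mk]

theorem isAddSmooth_prodReflHom_iff :
    IsAddSmooth (Perm.prodReflHom A B α) (fun u => π u.1) ↔ IsAddSmooth α π := by
  simp only [isAddSmooth_iff_zpow_eq, ← map_zpow, Perm.prodReflHom_injective.eq_iff,
    Perm.prodReflHom_apply, Prod.forall, forall_const]

end Product

section Shear

variable (R : Type*) [Ring R]

def shear : Perm (R × R) where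
  toFun u := (u.1, u.2 + u.1)
  invFun u := (u.1, u.2 - u.1)
  left_inv u := by simp
  right_inv u := by simp

variable {R}

@[simp]
theorem shear_apply (u : R × R) : shear R u = (u.1, u.2 + u.1) := rfl

@[simp]
theorem shear_inv_apply (u : R × R) : (shear R)⁻¹ u = (u.1, u.2 - u.1) := rfl

theorem shear_zpow_apply (k : ℤ) (u : R × R) : (shear R ^ k) u = (u.1, u.2 + k * u.1) := by
  induction k using Int.induction_on generalizing u with
  | zero => simp
  | succ k ih =>
    rw [zpow_add_one, Perm.mul_apply, shear_apply, ih]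
    simp only [Prod.mk.injEq, true_and]
    push_cast
    noncomm_ring
  | pred k ih =>
    rw [zpow_sub_one, Perm.mul_apply, shear_inv_apply, ih]
    simp only [Prod.mk.injEq, true_and]
    push_cast
    noncomm_ring

end Shear

namespace ZMod

variable {n : ℕ} [Invertible (2 : ZMod n)]

def choose2 (x : ZMod n) : ZMod n := x * (x - 1) * ⅟2

theorem choose2_add (x y : ZMod n) :
    choose2 (x + y) = choose2 x + choose2 y + x * y := by
  unfold choose2
  linear_combination x * y * mul_invOf_self (2 : ZMod n)

variable (n) in
def skewShear : Perm (ZMod n × ZMod n) where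
  toFun u := (-u.1, -u.2 + choose2 u.1)
  invFun u := (-u.1, -u.2 + choose2 (-u.1))
  left_inv u := by simp
  right_inv u := by simp

def skewShearPower (u : ZMod n × ZMod n) : ℤ := 1 - 2 * u.1.val

@[simp]
theorem skewShear_apply (u : ZMod n × ZMod n) :
    skewShear n u = (-u.1, -u.2 + choose2 u.1) := rfl

theorem skewShear_sq : skewShear n ^ 2 = shear (ZMod n) := by
  ext u
  · simp [sq]
  · simp only [sq, Perm.coe_mul, Function.comp_apply, skewShear_apply, choose2, neg_neg,
      neg_add_rev, neg_mul, shear_apply]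
    linear_combination u.1 * mul_invOf_self (2 : ZMod n)

theorem skewShear_zpow_two_mul_add_one_apply (k : ℤ) (u : ZMod n × ZMod n) :
    (skewShear n ^ (2 * k + 1)) u = (-u.1, -u.2 - k * u.1 + choose2 u.1) := by
  rw [zpow_add_one, zpow_mul, zpow_ofNat, skewShear_sq, Perm.mul_apply, shear_zpow_apply]
  simp only [skewShear_apply, mul_neg, Prod.mk.injEq, true_and]
  ring

variable [NeZero n]

theorem skewShear_zpow_skewShearPower_apply (u v : ZMod n × ZMod n) :
    (skewShear n ^ skewShearPower u) v = (-v.1, -v.2 + u.1 * v.1 + choose2 v.1) := by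
  rw [show skewShearPower u = 2 * (-(u.1.val : ℤ)) + 1 by unfold skewShearPower; ring,
    skewShear_zpow_two_mul_add_one_apply]
  push_cast [natCast_zmod_val]
  ring_nf

theorem isAddSkewMorphism_skewShear : IsAddSkewMorphism (skewShear n) skewShearPower := by
  refine ⟨by simp [choose2], fun u v => ?_⟩
  simp only [skewShear_zpow_skewShearPower_apply, skewShear_apply, Prod.fst_add, Prod.snd_add,
    choose2_add, Prod.mk_add_mk, neg_add]
  ring_nf

theorem not_isAddSmooth_skewShear [Nontrivial (ZMod n)] :
    ¬ IsAddSmooth (skewShear n) skewShearPower := by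
  rw [isAddSmooth_iff_zpow_eq]
  intro h
  have := congr(($(h (1, 0))) (1, 0))
  simp only [skewShear_zpow_skewShearPower_apply, skewShear_apply, choose2, sub_self, mul_zero,
    zero_mul, neg_zero, add_zero, zero_add, mul_one, Prod.mk.injEq, true_and] at this
  exact Invertible.ne_zero (2 : ZMod n) (by linear_combination -this)

end ZMod

theorem stmt19_general (p : ℕ) (hp : p.Prime) (hp2 : p ≠ 2)
    {B : Type*} [AddCommGroup B] :
    ∃ (φ : Equiv.Perm ((ZMod p × ZMod p) × B)) (π : (ZMod p × ZMod p) × B → ℤ),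
      IsAddSkewMorphism φ π ∧ ¬ IsAddSmooth φ π := by
  have := Fact.mk hp
  have : Invertible (2 : ZMod p) :=
    invertibleOfNonzero (Ring.two_ne_zero (by rwa [ZMod.ringChar_zmod_n]))
  exact ⟨_, _, ZMod.isAddSkewMorphism_skewShear.prodReflHom,
    isAddSmooth_prodReflHom_iff.not.mpr ZMod.not_isAddSmooth_skewShear⟩

theorem stmt19 (p : ℕ) (hp : p.Prime) (hp2 : p ≠ 2)
    {B : Type*} [AddCommGroup B] [Fintype B] :
    ∃ (φ : Equiv.Perm ((ZMod p × ZMod p) × B)) (π : (ZMod p × ZMod p) × B → ℤ),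
      IsAddSkewMorphism φ π ∧ ¬ IsAddSmooth φ π :=
  stmt19_general p hp hp2
end
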